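/- Let G be a weighted graph with sup_x Deg(x) ≤ D and suppose |Δ^k a(x)| ≤ A₃·(2D)^k·exp(A₄·(k + d(x,p))·ln(k + d(x,p))) for all k with 0 < A₄ < 1. Then for δ < 1/(2De), the function v(x,t) = Σ_{k≥0} Δ^k a(x)·t^k/k! solves the heat equation ∂_t v = Δv on V × (−δ, 0] with v(x,0) = a(x). -/

import Mathlib

open Real Filter

/-- A weighted graph: symmetric nonnegative edge weights, positive vertex
weights, locally finite. -/
structure WeightedGraph (V : Type*) where
  ω : V → V → ℝ
  μ : V → ℝ
  symm : ∀ x y, ω x y = ω y x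
  nonneg : ∀ x y, 0 ≤ ω x y
  loopless : ∀ x, ω x x = 0
  μ_pos : ∀ x, 0 < μ x
  locFin : ∀ x, (Function.support (ω x)).Finite

namespace WeightedGraph

variable {V : Type*}

/-- The graph Laplacian Δf(x) = Σ_y (ω_{xy}/μ_x)(f(y) - f(x)). -/
noncomputable def lap (G : WeightedGraph V) (f : V → ℝ) (x : V) : ℝ :=
  ∑' y, (G.ω x y / G.μ x) * (f y - f x)

/-- The weighted degree Deg(x) = Σ_y ω_{xy}/μ_x. -/
noncomputable def deg (G : WeightedGraph V) (x : V) : ℝ :=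
  ∑' y, G.ω x y / G.μ x

/-- The underlying simple graph: x ~ y iff ω_{xy} ≠ 0. -/
def adj (G : WeightedGraph V) : SimpleGraph V :=
  SimpleGraph.fromRel (fun x y => G.ω x y ≠ 0)

/-- The combinatorial graph distance. -/
noncomputable def dist (G : WeightedGraph V) (x y : V) : ℕ := G.adj.dist x y

/-- Iterated Laplacian Δ^k. -/
noncomputable def lapIter (G : WeightedGraph V) : ℕ → (V → ℝ) → (V → ℝ)
  | 0, f => f
  | (k+1), f => G.lap (G.lapIter k f)

end WeightedGraph

open Topology
open scoped Nat

/-! By the growth bound, the coefficients `Δ^k a(x) / k!` are dominated by a sequence whose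
consecutive ratios are `O((k + d)^{A₄} / k)`, which tends to `0` since `A₄ < 1`. Hence
`t ↦ v x t` is an entire power series that may be differentiated termwise (the weight `k + 1` in the
majorant absorbs the factor `k` of the differentiated terms), and its derivative
`∑ Δ^{k+1} a(x) t^k / k!` is `Δ (v · t) x`, because `Δ` at `x` is a finite sum. -/

lemma mul_log_succ_sub_mul_log_le {s : ℝ} (hs : 0 < s) :
    (s + 1) * log (s + 1) - s * log s ≤ log (s + 1) + 1 := by
  have h : log ((s + 1) / s) ≤ (s + 1) / s - 1 := log_le_sub_one_of_pos (by positivity)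
  rw [log_div (by positivity) hs.ne'] at h
  have h' : s * (log (s + 1) - log s) ≤ 1 := by
    calc s * (log (s + 1) - log s) ≤ s * ((s + 1) / s - 1) := by gcongr
      _ = 1 := by field_simp; ring
  linarith

lemma exp_mul_mul_log_succ_le {A s : ℝ} (hA : 0 ≤ A) (hs : 0 < s) :
    exp (A * (s + 1) * log (s + 1)) ≤ exp (A * s * log s) * (exp 1 * (s + 1)) ^ A := by
  rw [rpow_def_of_pos (by positivity), log_mul (exp_pos 1).ne' (by positivity), log_exp,
    ← exp_add, exp_le_exp]
  nlinarith [mul_log_succ_sub_mul_log_le hs]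

lemma exp_mul_natCast_mul_log_le_max (A : ℝ) (n : ℕ) :
    exp (A * n * log n) ≤ exp (max A 0 * n * log n) := by
  have : 0 ≤ (n : ℝ) * log n := mul_nonneg n.cast_nonneg (log_natCast_nonneg n)
  rw [exp_le_exp, mul_assoc, mul_assoc]
  exact mul_le_mul_of_nonneg_right (le_max_left A 0) this

lemma summable_of_norm_succ_le_mul {E : Type*} [SeminormedAddCommGroup E] [CompleteSpace E]
    {f : ℕ → E} {ρ : ℕ → ℝ} (hρ : Tendsto ρ atTop (𝓝 0))
    (hf : ∀ᶠ k in atTop, ‖f (k + 1)‖ ≤ ρ k * ‖f k‖) : Summable f := by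
  refine summable_of_ratio_norm_eventually_le (r := 1 / 2) (by norm_num) ?_
  filter_upwards [hf, hρ.eventually_le_const (by norm_num : (0 : ℝ) < 1 / 2)] with k hk hρk
  exact hk.trans (by gcongr)

noncomputable def growthMajorant (A c : ℝ) (d k : ℕ) : ℝ :=
  (k + 1) * c ^ k * exp (A * (k + d) * log (k + d)) / k !

lemma growthMajorant_succ_le {A c : ℝ} (hA : 0 ≤ A) (hc : 0 ≤ c) (d : ℕ) {k : ℕ} (hk : 1 ≤ k) :
    growthMajorant A c d (k + 1) ≤
      2 * c * exp A * (d + 1) * (k + d + 1 : ℝ) ^ (A - 1) * growthMajorant A c d k := by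
  set s : ℝ := k + d
  have hk1 : (1 : ℝ) ≤ k := by exact_mod_cast hk
  have hs : 0 < s := by positivity
  have hq : (exp 1 * (s + 1)) ^ A / (k + 1) ≤ exp A * (d + 1) * (s + 1) ^ (A - 1) := by
    have h : (s + 1) / (k + 1) ≤ d + 1 := by
      rw [div_le_iff₀ (by positivity)]; nlinarith
    have hne : s + 1 ≠ 0 := by positivity
    calc (exp 1 * (s + 1)) ^ A / (k + 1) = exp A * (s + 1) ^ (A - 1) * ((s + 1) / (k + 1)) := by
          rw [mul_rpow (exp_pos 1).le (by positivity), exp_one_rpow, rpow_sub_one hne]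
          field_simp
      _ ≤ exp A * (s + 1) ^ (A - 1) * (d + 1) := by gcongr
      _ = _ := by ring
  have hfac : ((k + 1) ! : ℝ) = (k + 1) * k ! := by push_cast [Nat.factorial_succ]; ring
  have hk2 : ((k : ℝ) + 1 + 1) / (k + 1) ≤ 2 := by rw [div_le_iff₀ (by positivity)]; linarith
  unfold growthMajorant
  rw [hfac]
  push_cast
  rw [show (k : ℝ) + 1 + d = s + 1 by ring]
  calc (k + 1 + 1) * c ^ (k + 1) * exp (A * (s + 1) * log (s + 1)) / ((k + 1) * k !)
      ≤ (k + 1 + 1) * c ^ (k + 1) * (exp (A * s * log s) * (exp 1 * (s + 1)) ^ A)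
          / ((k + 1) * k !) := by gcongr; exact exp_mul_mul_log_succ_le hA hs
    _ = (k + 1 + 1) / (k + 1) * c * ((exp 1 * (s + 1)) ^ A / (k + 1))
          * ((k + 1) * c ^ k * exp (A * s * log s) / k !) := by field_simp; ring
    _ ≤ 2 * c * (exp A * (d + 1) * (s + 1) ^ (A - 1))
          * ((k + 1) * c ^ k * exp (A * s * log s) / k !) := by gcongr
    _ = _ := by ring

lemma summable_growthMajorant {A c : ℝ} (hA₀ : 0 ≤ A) (hA₁ : A < 1) (hc : 0 ≤ c) (d : ℕ) :
    Summable (growthMajorant A c d) := by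
  have hρ : Tendsto (fun k : ℕ => 2 * c * exp A * (d + 1) * (k + d + 1 : ℝ) ^ (A - 1))
      atTop (𝓝 0) := by
    have hlin : Tendsto (fun k : ℕ => (k + d + 1 : ℝ)) atTop atTop :=
      tendsto_atTop_add_const_right _ _ <|
        tendsto_atTop_add_const_right _ _ tendsto_natCast_atTop_atTop
    have hpow := (tendsto_rpow_neg_atTop (sub_pos.mpr hA₁)).comp hlin
    rw [neg_sub] at hpow
    simpa using hpow.const_mul (2 * c * exp A * (d + 1))
  have hnonneg (k : ℕ) : 0 ≤ growthMajorant A c d k := by unfold growthMajorant; positivity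
  refine summable_of_norm_succ_le_mul hρ ?_
  filter_upwards [eventually_ge_atTop 1] with k hk
  rw [norm_of_nonneg (hnonneg _), norm_of_nonneg (hnonneg _)]
  exact growthMajorant_succ_le hA₀ hc d hk

lemma summable_succ_mul_abs_mul_pow_div_factorial_of_growth {b : ℕ → ℝ} {C B A : ℝ} {d : ℕ}
    (hA : A < 1) (hb : ∀ k : ℕ, |b k| ≤ C * B ^ k * exp (A * (k + d) * log (k + d))) (R : ℝ) :
    Summable fun k : ℕ => (k + 1) * |b k| * R ^ k / k ! := by
  refine .of_norm_bounded ((summable_growthMajorant (le_max_right A 0) (max_lt hA one_pos)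
    (abs_nonneg (B * R)) d).mul_left |C|) fun k => ?_
  have hexp : exp (A * (k + d) * log (k + d)) ≤ exp (max A 0 * (k + d) * log (k + d)) := by
    exact_mod_cast exp_mul_natCast_mul_log_le_max A (k + d)
  have hbk : |b k| ≤ |C| * |B| ^ k * exp (max A 0 * (k + d) * log (k + d)) := by
    calc |b k| ≤ C * B ^ k * exp (A * (k + d) * log (k + d)) := hb k
      _ ≤ |C * B ^ k| * exp (A * (k + d) * log (k + d)) := by gcongr; exact le_abs_self _
      _ ≤ _ := by rw [abs_mul, abs_pow]; exact mul_le_mul_of_nonneg_left hexp (by positivity)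
  rw [Real.norm_eq_abs, abs_div, abs_mul, abs_mul, abs_abs, abs_pow, Nat.abs_cast,
    abs_of_nonneg (by positivity : (0 : ℝ) ≤ k + 1)]
  calc (k + 1) * |b k| * |R| ^ k / k !
      ≤ (k + 1) * (|C| * |B| ^ k * exp (max A 0 * (k + d) * log (k + d))) * |R| ^ k / k ! := by
        gcongr
    _ = |C| * growthMajorant (max A 0) |B * R| d k := by
        rw [growthMajorant, abs_mul, mul_pow]; ring

lemma summable_mul_pow_div_factorial {b : ℕ → ℝ} {R t : ℝ} (ht : |t| ≤ R)
    (hb : Summable fun k : ℕ => (k + 1) * |b k| * R ^ k / k !) :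
    Summable fun k : ℕ => b k * t ^ k / k ! := by
  refine .of_norm_bounded hb fun k => ?_
  rw [Real.norm_eq_abs, abs_div, abs_mul, abs_pow, Nat.abs_cast]
  have : |b k| * |t| ^ k ≤ (k + 1) * |b k| * R ^ k := by
    calc |b k| * |t| ^ k ≤ |b k| * R ^ k := by gcongr
      _ ≤ (k + 1) * (|b k| * R ^ k) :=
          le_mul_of_one_le_left (by positivity [(abs_nonneg t).trans ht]) (by simp)
      _ = _ := by ring
  gcongr

lemma hasDerivAt_tsum_mul_pow_div_factorial {b : ℕ → ℝ} {R t : ℝ} (hR : 1 ≤ R) (ht : |t| < R)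
    (hb : Summable fun k : ℕ => (k + 1) * |b k| * R ^ k / k !) :
    HasDerivAt (fun u => ∑' k : ℕ, b k * u ^ k / k !) (∑' k : ℕ, b (k + 1) * t ^ k / k !) t := by
  have hderiv (k : ℕ) (u : ℝ) : HasDerivAt (fun u => b k * u ^ k / k !)
      (b k * (k * u ^ (k - 1)) / k !) u :=
    ((hasDerivAt_pow k u).const_mul (b k)).div_const _
  have hbound (k : ℕ) (u : ℝ) (hu : u ∈ Set.Ioo (-R) R) :
      ‖b k * (k * u ^ (k - 1)) / (k ! : ℝ)‖ ≤ (k + 1) * |b k| * R ^ k / k ! := by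
    have hu' : |u| ≤ R := (abs_lt.mpr hu).le
    have hpow : (k : ℝ) * |u| ^ (k - 1) ≤ (k + 1) * R ^ k := by
      calc (k : ℝ) * |u| ^ (k - 1) ≤ k * R ^ (k - 1) := by gcongr
        _ ≤ (k + 1) * R ^ k := by gcongr <;> [linarith; omega]
    rw [Real.norm_eq_abs, abs_div, abs_mul, abs_mul, abs_pow, Nat.abs_cast, Nat.abs_cast]
    calc |b k| * (k * |u| ^ (k - 1)) / k ! ≤ |b k| * ((k + 1) * R ^ k) / k ! := by gcongr
      _ = _ := by ring
  have hmem : t ∈ Set.Ioo (-R) R := abs_lt.mp ht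
  have hsum' := Summable.of_norm_bounded hb fun k => hbound k t hmem
  refine (hasDerivAt_tsum_of_isPreconnected hb isOpen_Ioo (convex_Ioo (-R) R).isPreconnected
    (fun k u _ => hderiv k u) hbound (y₀ := 0) (by constructor <;> linarith)
    (summable_mul_pow_div_factorial (by rw [abs_zero]; linarith) hb) hmem).congr_deriv ?_
  rw [hsum'.tsum_eq_zero_add]
  simp only [Nat.cast_zero, zero_mul, mul_zero, zero_div, zero_add]
  refine tsum_congr fun k => ?_
  push_cast [Nat.factorial_succ, Nat.add_sub_cancel]
  field_simp

namespace WeightedGraph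

variable {V : Type*} (G : WeightedGraph V)

lemma lap_eq_sum (f : V → ℝ) (x : V) :
    G.lap f x = ∑ y ∈ (G.locFin x).toFinset, G.ω x y / G.μ x * (f y - f x) := by
  refine tsum_eq_sum fun y hy => ?_
  rw [Set.Finite.mem_toFinset, Function.notMem_support] at hy
  simp [hy]

lemma lap_mul_const (f : V → ℝ) (c : ℝ) (x : V) :
    G.lap (fun y => f y * c) x = G.lap f x * c := by
  rw [lap, lap, ← tsum_mul_right]
  exact tsum_congr fun y => by ring

lemma lap_tsum {ι : Type*} (f : ι → V → ℝ) (hf : ∀ y, Summable fun i => f i y) (x : V) :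
    G.lap (fun y => ∑' i, f i y) x = ∑' i, G.lap (f i) x := by
  simp_rw [lap_eq_sum]
  rw [Summable.tsum_finsetSum fun y _ => ((hf y).sub (hf x)).mul_left _]
  refine Finset.sum_congr rfl fun y _ => ?_
  rw [tsum_mul_left, (hf y).tsum_sub (hf x)]

end WeightedGraph

theorem series_solves_heat_equation_general {V : Type*} (G : WeightedGraph V)
    (p : V) (D A₃ A₄ δ : ℝ)
    (hA₄1 : A₄ < 1)
    (a : V → ℝ)
    (ha : ∀ (k : ℕ) (x : V), |G.lapIter k a x| ≤
      A₃ * (2 * D) ^ k * Real.exp (A₄ * ((k : ℝ) + (G.dist x p : ℝ)) *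
        Real.log ((k : ℝ) + (G.dist x p : ℝ))))
    (v : V → ℝ → ℝ)
    (hv : ∀ x t, v x t = ∑' k : ℕ, G.lapIter k a x * t ^ k / (Nat.factorial k : ℝ)) :
    (∀ x, v x 0 = a x) ∧
    (∀ x, ∀ t ∈ Set.Ioc (-δ) (0:ℝ),
      HasDerivWithinAt (v x) (G.lap (fun y => v y t) x) (Set.Ioc (-δ) (0:ℝ)) t) := by
  have hmaj (x : V) (R : ℝ) : Summable fun k : ℕ => (k + 1) * |G.lapIter k a x| * R ^ k / k ! :=
    summable_succ_mul_abs_mul_pow_div_factorial_of_growth hA₄1 (ha · x) R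
  refine ⟨fun x => ?_, fun x t _ => ?_⟩
  · rw [hv, tsum_eq_single 0 fun k hk => by simp [hk]]
    simp [WeightedGraph.lapIter]
  · set R := |t| + 1
    have hsum (y : V) : Summable fun k : ℕ => G.lapIter k a y * t ^ k / k ! :=
      summable_mul_pow_div_factorial (by linarith) (hmaj y R)
    have hlap : G.lap (fun y => v y t) x = ∑' k : ℕ, G.lapIter (k + 1) a x * t ^ k / k ! := by
      simp_rw [hv, mul_div_assoc]
      rw [G.lap_tsum _ (by simpa only [mul_div_assoc] using hsum)]
      simp_rw [G.lap_mul_const]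
      rfl
    rw [hlap, show v x = fun u => ∑' k : ℕ, G.lapIter k a x * u ^ k / k ! from funext (hv x)]
    exact (hasDerivAt_tsum_mul_pow_div_factorial (by linarith [abs_nonneg t]) (lt_add_one _)
      (hmaj x R)).hasDerivWithinAt

/-- v(x,t) = Σ Δ^k a(x) t^k/k! solves the heat equation on
V × (−δ, 0] with v(x,0) = a(x). -/
theorem series_solves_heat_equation {V : Type*} (G : WeightedGraph V)
    (hconn : G.adj.Connected) (p : V) (D A₃ A₄ δ : ℝ)
    (hD : ∀ x, G.deg x ≤ D) (hA₃ : 0 < A₃) (hA₄0 : 0 < A₄) (hA₄1 : A₄ < 1)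
    (a : V → ℝ)
    (ha : ∀ (k : ℕ) (x : V), |G.lapIter k a x| ≤
      A₃ * (2 * D) ^ k * Real.exp (A₄ * ((k : ℝ) + (G.dist x p : ℝ)) *
        Real.log ((k : ℝ) + (G.dist x p : ℝ))))
    (hδ0 : 0 < δ) (hδ : δ < 1 / (2 * D * Real.exp 1))
    (v : V → ℝ → ℝ)
    (hv : ∀ x t, v x t = ∑' k : ℕ, G.lapIter k a x * t ^ k / (Nat.factorial k : ℝ)) :
    (∀ x, v x 0 = a x) ∧
    (∀ x, ∀ t ∈ Set.Ioc (-δ) (0:ℝ),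
      HasDerivWithinAt (v x) (G.lap (fun y => v y t) x) (Set.Ioc (-δ) (0:ℝ)) t) :=
  series_solves_heat_equation_general G p D A₃ A₄ δ hA₄1 a ha v hv
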